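/- Lower semicontinuity of eigenvalues: for every k ≥ 1, the k-th eigenvalue λ_k(Ω) = inf over k-dimensional subspaces K ⊂ H₀(Ω) of sup{∫|Du|²dm : u ∈ K, ∫u²dm = 1} is decreasing with respect to set inclusion and lower semicontinuous along weak-γ-convergent sequences of energy sets: Ω_n →_{wγ} Ω implies λ_k(Ω) ≤ liminf_n λ_k(Ω_n). -/

import Mathlib

open MeasureTheory Filter
open scoped ENNReal

namespace AbsSob

variable {X : Type*} [MeasurableSpace X]

/-- Abstract Sobolev setting: a Riesz subspace `H` of `L²(X,m)` with the Stone
property (H1)-(H2), together with a gradient-like map `D` satisfying (D1)-(D4). -/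
structure Setting (X : Type*) [MeasurableSpace X] (m : Measure X) where
  H : Set (X → ℝ)
  D : (X → ℝ) → X → ℝ
  zero_mem : (fun _ => (0 : ℝ)) ∈ H
  add_mem : ∀ ⦃u v : X → ℝ⦄, u ∈ H → v ∈ H → u + v ∈ H
  smul_mem : ∀ (c : ℝ) ⦃u : X → ℝ⦄, u ∈ H → c • u ∈ H
  sup_mem : ∀ ⦃u v : X → ℝ⦄, u ∈ H → v ∈ H → u ⊔ v ∈ H
  inf_mem : ∀ ⦃u v : X → ℝ⦄, u ∈ H → v ∈ H → u ⊓ v ∈ H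
  stone : ∀ ⦃u : X → ℝ⦄, u ∈ H → u ⊓ 1 ∈ H
  memL2 : ∀ ⦃u : X → ℝ⦄, u ∈ H → MemLp u 2 m
  gradL2 : ∀ ⦃u : X → ℝ⦄, u ∈ H → MemLp (D u) 2 m
  D1 : ∀ ⦃u : X → ℝ⦄, u ∈ H → ∀ᵐ x ∂m, 0 ≤ D u x
  D2 : ∀ ⦃u v : X → ℝ⦄, u ∈ H → v ∈ H → ∀ᵐ x ∂m, D (u + v) x ≤ D u x + D v x
  D3 : ∀ (c : ℝ) ⦃u : X → ℝ⦄, u ∈ H → ∀ᵐ x ∂m, D (c • u) x = |c| * D u x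
  D4 : ∀ ⦃u v : X → ℝ⦄, u ∈ H → v ∈ H → ∀ᵐ x ∂m,
      D (u ⊔ v) x = if v x < u x then D u x else D v x

variable {m : Measure X}

/-- Square of the `H`-norm: `‖u‖_H² = ‖u‖²_{L²} + ‖Du‖²_{L²}`. -/
noncomputable def normHsq (S : Setting X m) (u : X → ℝ) : ℝ :=
  ∫ x, (u x) ^ 2 ∂m + ∫ x, (S.D u x) ^ 2 ∂m

/-- Sobolev functions vanishing (m-a.e.) outside `Ω`. -/
def H0 (S : Setting X m) (Ω : Set X) : Set (X → ℝ) :=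
  {u | u ∈ S.H ∧ ∀ᵐ x ∂m, x ∉ Ω → u x = 0}

/-- The functional `F^{a,f}(u) = ½∫|Du|² + (a/2)∫u² − ∫ f u`. -/
noncomputable def F (S : Setting X m) (a : ℝ) (f : X → ℝ) (u : X → ℝ) : ℝ :=
  (1 / 2) * ∫ x, (S.D u x) ^ 2 ∂m + (a / 2) * ∫ x, (u x) ^ 2 ∂m - ∫ x, f x * u x ∂m

/-- `w` is a minimizer of `F^{a,f}` over `H₀(Ω)`. -/
def IsMinimizer (S : Setting X m) (Ω : Set X) (a : ℝ) (f : X → ℝ) (w : X → ℝ) : Prop :=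
  w ∈ H0 S Ω ∧ ∀ u ∈ H0 S Ω, F S a f w ≤ F S a f u

/-- (ℋ2): the inclusion `H ↪ L²` is compact. -/
def CompactEmbedding (S : Setting X m) : Prop :=
  ∀ u : ℕ → X → ℝ, (∀ n, u n ∈ S.H) → (∃ C : ℝ, ∀ n, normHsq S (u n) ≤ C) →
    ∃ (φ : ℕ → ℕ) (v : X → ℝ), StrictMono φ ∧ v ∈ S.H ∧
      Tendsto (fun k => ∫ x, (u (φ k) x - v x) ^ 2 ∂m) atTop (nhds 0)

/-- (ℋ3): lower semicontinuity of the gradient energy along `L²`-convergent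
`H`-bounded sequences, whose limit moreover belongs to `H`. -/
def GradLSC (S : Setting X m) : Prop :=
  ∀ (u : ℕ → X → ℝ) (v : X → ℝ), (∀ n, u n ∈ S.H) →
    (∃ C : ℝ, ∀ n, normHsq S (u n) ≤ C) →
    Tendsto (fun n => ∫ x, (u n x - v x) ^ 2 ∂m) atTop (nhds 0) →
    v ∈ S.H ∧ ∫ x, (S.D v x) ^ 2 ∂m ≤ liminf (fun n => ∫ x, (S.D (u n) x) ^ 2 ∂m) atTop

/-- Energy sets: Borel sets coinciding up to an `m`-null set with `{w_Ω > 0}`. -/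
def IsEnergySet (S : Setting X m) (Ω : Set X) : Prop :=
  MeasurableSet Ω ∧ ∃ w, IsMinimizer S Ω 1 (fun _ => 1) w ∧ m (Ω \ {x | 0 < w x}) = 0


/-- The `k`-th eigenvalue via the min-max over `k`-dimensional subspaces of `H₀(Ω)`. -/
noncomputable def lambdaK (S : Setting X m) (Ω : Set X) (k : ℕ) : ℝ≥0∞ :=
  sInf {r : ℝ≥0∞ | ∃ b : Fin k → X → ℝ, (∀ i, b i ∈ H0 S Ω) ∧ LinearIndependent ℝ b ∧
    r = sSup {s : ℝ≥0∞ | ∃ c : Fin k → ℝ,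
      (∫ x, (∑ i, c i * b i x) ^ 2 ∂m) = 1 ∧
      s = ENNReal.ofReal (∫ x, (S.D (fun y => ∑ i, c i * b i y) x) ^ 2 ∂m)}}

/-!
Antitonicity is immediate from `H₀(ω) ⊆ H₀(Ω)`. For lower semicontinuity, take `B` above the
liminf: infinitely many `Ωₙ` carry a `k`-dimensional subspace of `H₀(Ωₙ)` with Rayleigh quotients
at most `B`. Orthonormalized in `L²`, these bases are bounded in `H`, so by (ℋ2) a subsequence
converges in `L²`; the `L²` Gram matrix passes to the limit, and by (ℋ3) so does the Rayleigh
bound. The limit functions `u` lie in `H₀({w > 0})`: testing the minimality of `wₙ` against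
`wₙ ⊔ s uₙ` gives `∫ (s uₙ - wₙ)⁺ ≤ s² ‖uₙ‖²_H / 2`, hence `s ∫_{w ≤ 0} u⁺ ≤ ∫ (s u - w)⁺ ≤ C s²`
for all `s > 0`, so `u ≤ 0` where `w ≤ 0`; the same holds for `-u`.
-/

open scoped InnerProductSpace

theorem sum_smul_eq_fun {Y ι : Type*} [Fintype ι] (c : ι → ℝ) (b : ι → Y → ℝ) :
    ∑ i, c i • b i = fun y => ∑ i, c i * b i y := by
  ext y; simp [Finset.sum_apply]

section L2
variable {X : Type*} [MeasurableSpace X] {m : Measure X}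

def TendstoL2 (m : Measure X) (f : ℕ → X → ℝ) (g : X → ℝ) : Prop :=
  Tendsto (fun n => ∫ x, (f n x - g x) ^ 2 ∂m) atTop (nhds 0)

theorem integral_mul_eq_inner {f g : X → ℝ} (hf : MemLp f 2 m) (hg : MemLp g 2 m) :
    ∫ x, f x * g x ∂m = ⟪hf.toLp f, hg.toLp g⟫_ℝ := by
  rw [L2.inner_def]
  refine integral_congr_ae ?_
  filter_upwards [hf.coeFn_toLp, hg.coeFn_toLp] with x hfx hgx
  simp [hfx, hgx, mul_comm]

theorem integral_sq_eq_norm_sq {f : X → ℝ} (hf : MemLp f 2 m) :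
    ∫ x, f x ^ 2 ∂m = ‖hf.toLp f‖ ^ 2 := by
  rw [← real_inner_self_eq_norm_sq, ← integral_mul_eq_inner]
  simp only [sq]

theorem tendstoL2_iff {f : ℕ → X → ℝ} {g : X → ℝ} (hf : ∀ n, MemLp (f n) 2 m)
    (hg : MemLp g 2 m) :
    TendstoL2 m f g ↔ Tendsto (fun n => (hf n).toLp (f n)) atTop (nhds (hg.toLp g)) := by
  have h : ∀ n, ∫ x, (f n x - g x) ^ 2 ∂m = ‖(hf n).toLp (f n) - hg.toLp g‖ ^ 2 := fun n => by
    rw [← MemLp.toLp_sub]; exact integral_sq_eq_norm_sq ((hf n).sub hg)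
  rw [TendstoL2, tendsto_iff_norm_sub_tendsto_zero (E := Lp ℝ 2 m)]
  simp_rw [h]
  constructor
  · intro h2
    simpa using h2.sqrt
  · intro h1
    simpa using h1.pow 2

theorem TendstoL2.integral_sq {f : ℕ → X → ℝ} {g : X → ℝ} (h : TendstoL2 m f g)
    (hf : ∀ n, MemLp (f n) 2 m) (hg : MemLp g 2 m) :
    Tendsto (fun n => ∫ x, f n x ^ 2 ∂m) atTop (nhds (∫ x, g x ^ 2 ∂m)) := by
  simp_rw [integral_sq_eq_norm_sq (hf _), integral_sq_eq_norm_sq hg]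
  exact ((tendstoL2_iff hf hg).1 h).norm.pow 2

theorem TendstoL2.integral [IsFiniteMeasure m] {f : ℕ → X → ℝ} {g : X → ℝ} (h : TendstoL2 m f g)
    (hf : ∀ n, MemLp (f n) 2 m) (hg : MemLp g 2 m) :
    Tendsto (fun n => ∫ x, f n x ∂m) atTop (nhds (∫ x, g x ∂m)) := by
  have h1 : MemLp (fun _ => (1 : ℝ)) 2 m := memLp_const 1
  have key : ∀ u (hu : MemLp u 2 m), ∫ x, u x ∂m = ⟪hu.toLp u, h1.toLp _⟫_ℝ := fun u hu => by
    rw [← integral_mul_eq_inner]; simp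
  simp_rw [key _ (hf _), key _ hg]
  exact ((tendstoL2_iff hf hg).1 h).inner tendsto_const_nhds

theorem TendstoL2.add {f f' : ℕ → X → ℝ} {g g' : X → ℝ} (h : TendstoL2 m f g)
    (h' : TendstoL2 m f' g') (hf : ∀ n, MemLp (f n) 2 m) (hf' : ∀ n, MemLp (f' n) 2 m)
    (hg : MemLp g 2 m) (hg' : MemLp g' 2 m) :
    TendstoL2 m (fun n => f n + f' n) (g + g') := by
  rw [tendstoL2_iff (fun n => (hf n).add (hf' n)) (hg.add hg')]
  convert ((tendstoL2_iff hf hg).1 h).add ((tendstoL2_iff hf' hg').1 h') using 1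
  · ext n : 1; exact MemLp.toLp_add (hf n) (hf' n)
  · rw [MemLp.toLp_add hg hg']

theorem TendstoL2.sub {f f' : ℕ → X → ℝ} {g g' : X → ℝ} (h : TendstoL2 m f g)
    (h' : TendstoL2 m f' g') (hf : ∀ n, MemLp (f n) 2 m) (hf' : ∀ n, MemLp (f' n) 2 m)
    (hg : MemLp g 2 m) (hg' : MemLp g' 2 m) :
    TendstoL2 m (fun n => f n - f' n) (g - g') := by
  rw [tendstoL2_iff (fun n => (hf n).sub (hf' n)) (hg.sub hg')]
  convert ((tendstoL2_iff hf hg).1 h).sub ((tendstoL2_iff hf' hg').1 h') using 1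
  · ext n : 1; exact MemLp.toLp_sub (hf n) (hf' n)
  · rw [MemLp.toLp_sub hg hg']

theorem TendstoL2.const_smul {f : ℕ → X → ℝ} {g : X → ℝ} (h : TendstoL2 m f g) (c : ℝ) :
    TendstoL2 m (fun n => c • f n) (c • g) := by
  have hc : ∀ n, ∫ x, ((c • f n) x - (c • g) x) ^ 2 ∂m = c ^ 2 * ∫ x, (f n x - g x) ^ 2 ∂m :=
    fun n => by
      rw [← integral_const_mul]; congr 1; ext x
      simp only [Pi.smul_apply, smul_eq_mul]; ring
  simpa only [TendstoL2, hc, mul_zero] using h.const_mul (c ^ 2)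

theorem TendstoL2.posPart {f : ℕ → X → ℝ} {g : X → ℝ} (h : TendstoL2 m f g)
    (hf : ∀ n, MemLp (f n) 2 m) (hg : MemLp g 2 m) :
    TendstoL2 m (fun n x => max (f n x) 0) (fun x => max (g x) 0) := by
  refine squeeze_zero (fun n => integral_nonneg fun x => sq_nonneg _) (fun n => ?_) h
  refine integral_mono (((hf n).pos_part.sub hg.pos_part).integrable_sq)
    (((hf n).sub hg).integrable_sq) fun x => ?_
  simpa only [sq_abs] using pow_le_pow_left₀ (abs_nonneg _)
    (abs_max_sub_max_le_abs (f n x) (g x) 0) 2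

theorem tendstoL2_finset_sum {ι : Type*} (s : Finset ι) {f : ℕ → ι → X → ℝ} {g : ι → X → ℝ}
    (h : ∀ i, TendstoL2 m (fun n => f n i) (g i)) (hf : ∀ n i, MemLp (f n i) 2 m)
    (hg : ∀ i, MemLp (g i) 2 m) :
    TendstoL2 m (fun n => ∑ i ∈ s, f n i) (∑ i ∈ s, g i) := by
  classical
  induction s using Finset.induction_on with
  | empty => simp [TendstoL2]
  | insert a s ha ih =>
    simp only [Finset.sum_insert ha]
    exact (h a).add ih (hf · a) (fun n => memLp_finsetSum' _ fun i _ => hf n i) (hg a)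
      (memLp_finsetSum' _ fun i _ => hg i)

theorem tendstoL2_of_ae_eq {f : ℕ → X → ℝ} {g : X → ℝ} (h : ∀ n, f n =ᵐ[m] g) :
    TendstoL2 m f g := by
  refine tendsto_const_nhds.congr fun n => (integral_eq_zero_of_ae ?_).symm
  filter_upwards [h n] with x hx
  simp [hx]

end L2

section Sobolev
variable {X : Type*} [MeasurableSpace X] {m : Measure X} (S : Setting X m)

def Setting.toSubmodule : Submodule ℝ (X → ℝ) where
  carrier := S.H
  add_mem' := fun hu hv => S.add_mem hu hv
  zero_mem' := S.zero_mem
  smul_mem' := S.smul_mem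

def H0Submodule (Ω : Set X) : Submodule ℝ (X → ℝ) where
  carrier := H0 S Ω
  add_mem' := fun ⟨hu, hu0⟩ ⟨hv, hv0⟩ => ⟨S.add_mem hu hv, by
    filter_upwards [hu0, hv0] with x h1 h2 hx
    simp [h1 hx, h2 hx]⟩
  zero_mem' := ⟨S.zero_mem, by simp⟩
  smul_mem' := fun c _ ⟨hu, hu0⟩ => ⟨S.smul_mem c hu, by
    filter_upwards [hu0] with x h1 hx
    simp [h1 hx]⟩

variable {S}

theorem sup_mem_H0 {Ω : Set X} {u v : X → ℝ} (hu : u ∈ H0 S Ω) (hv : v ∈ H0 S Ω) :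
    u ⊔ v ∈ H0 S Ω := by
  refine ⟨S.sup_mem hu.1 hv.1, ?_⟩
  filter_upwards [hu.2, hv.2] with x h1 h2 hx
  simp [h1 hx, h2 hx]

/-- (D4) breaks ties differently for `u ⊔ 0` and `0 ⊔ u`, so `D u = D 0 = 0` where `u = 0`. -/
theorem Setting.D_eq_zero_of_ae_eq_zero {u : X → ℝ} (hu : u ∈ S.H)
    (h : u =ᵐ[m] 0) : S.D u =ᵐ[m] 0 := by
  have hD0 : ∀ᵐ x ∂m, S.D 0 x = 0 := by
    filter_upwards [S.D3 0 S.zero_mem] with x hx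
    simpa using hx
  filter_upwards [S.D4 hu S.zero_mem, S.D4 S.zero_mem hu, h, hD0] with x h1 h2 hx h0
  have hsup : u ⊔ (fun _ => (0 : ℝ)) = (fun _ => (0 : ℝ)) ⊔ u := sup_comm _ _
  simp only [hsup, Pi.zero_apply] at h1 h2 hx
  simp only [hx, lt_self_iff_false, if_false] at h1 h2
  rw [Pi.zero_apply, ← h2, h1]
  exact h0

theorem integral_D_sq_eq_zero {u : X → ℝ} (hu : u ∈ S.H) (h : u =ᵐ[m] 0) :
    ∫ x, S.D u x ^ 2 ∂m = 0 := by
  refine integral_eq_zero_of_ae ?_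
  filter_upwards [S.D_eq_zero_of_ae_eq_zero hu h] with x hx
  simp [hx]

theorem normHsq_smul (c : ℝ) {u : X → ℝ} (hu : u ∈ S.H) :
    normHsq S (c • u) = c ^ 2 * normHsq S u := by
  have hD : ∫ x, S.D (c • u) x ^ 2 ∂m = c ^ 2 * ∫ x, S.D u x ^ 2 ∂m := by
    rw [← integral_const_mul]
    refine integral_congr_ae ?_
    filter_upwards [S.D3 c hu] with x hx
    rw [hx, mul_pow, sq_abs]
  simp only [normHsq, hD, Pi.smul_apply, smul_eq_mul, mul_pow, integral_const_mul, mul_add]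

end Sobolev

section Torsion
variable {X : Type*} [MeasurableSpace X] {m : Measure X}

theorem ae_nonpos_of_integral_posPart_le {v w : X → ℝ} {K : ℝ} (hv : Integrable v m)
    (hw : Integrable w m) (h : ∀ s : ℝ, 0 < s → ∫ x, max (s * v x - w x) 0 ∂m ≤ s ^ 2 * K) :
    ∀ᵐ x ∂m, w x ≤ 0 → v x ≤ 0 := by
  set E := {x | w x ≤ 0}
  have hE : NullMeasurableSet E m := nullMeasurableSet_le hw.aemeasurable aemeasurable_const
  have hbound : ∀ s : ℝ, 0 < s → ∫ x in E, max (v x) 0 ∂m ≤ s * K := fun s hs => by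
    have hmono : ∫ x in E, s * max (v x) 0 ∂m ≤ ∫ x in E, max (s * v x - w x) 0 ∂m := by
      refine setIntegral_mono_on_ae₀ (hv.pos_part.const_mul s).integrableOn
        ((hv.const_mul s).sub hw).pos_part.integrableOn hE (ae_of_all _ fun x (hx : w x ≤ 0) => ?_)
      rw [mul_max_of_nonneg _ _ hs.le, mul_zero]
      exact max_le_max (by linarith) le_rfl
    have hset : ∫ x in E, max (s * v x - w x) 0 ∂m ≤ ∫ x, max (s * v x - w x) 0 ∂m :=
      setIntegral_le_integral ((hv.const_mul s).sub hw).pos_part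
        (ae_of_all _ fun x => le_max_right _ _)
    rw [integral_const_mul] at hmono
    refine le_of_mul_le_mul_left ?_ hs
    linarith [h s hs]
  have hzero : ∫ x in E, max (v x) 0 ∂m = 0 := by
    have hlim : Tendsto (fun n : ℕ => 1 / ((n : ℝ) + 1) * K) atTop (nhds 0) := by
      simpa using tendsto_one_div_add_atTop_nhds_zero_nat.mul_const K
    exact le_antisymm (ge_of_tendsto' hlim fun n => hbound _ Nat.one_div_pos_of_nat)
      (integral_nonneg fun x => le_max_right _ _)
  rw [setIntegral_eq_zero_iff_of_nonneg_ae (f := fun x => max (v x) 0)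
    (ae_of_all _ fun x => le_max_right _ _)
    hv.pos_part.integrableOn, EventuallyEq, ae_restrict_iff'₀ hE] at hzero
  filter_upwards [hzero] with x hx hwx
  simpa using hx hwx

variable [IsFiniteMeasure m] {S : Setting X m}

theorem IsMinimizer.integral_posPart_sub_le {Ω : Set X} {w u : X → ℝ}
    (hmin : IsMinimizer S Ω 1 (fun _ => 1) w) (hu : u ∈ H0 S Ω) :
    ∫ x, max (u x - w x) 0 ∂m ≤ normHsq S u / 2 := by
  obtain ⟨hw, hF⟩ := hmin
  have hwL := S.memL2 hw.1
  have huL := S.memL2 hu.1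
  have hgL := S.memL2 (S.sup_mem hw.1 hu.1)
  have hF' := hF _ (sup_mem_H0 hw hu)
  have hDsq : ∫ x, S.D (w ⊔ u) x ^ 2 ∂m ≤ ∫ x, S.D w x ^ 2 ∂m + ∫ x, S.D u x ^ 2 ∂m := by
    rw [← integral_add (S.gradL2 hw.1).integrable_sq (S.gradL2 hu.1).integrable_sq]
    refine integral_mono_ae (S.gradL2 (S.sup_mem hw.1 hu.1)).integrable_sq
      ((S.gradL2 hw.1).integrable_sq.add (S.gradL2 hu.1).integrable_sq) ?_
    filter_upwards [S.D4 hw.1 hu.1] with x hx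
    rw [hx]
    split_ifs <;> nlinarith [sq_nonneg (S.D w x), sq_nonneg (S.D u x)]
  have hsq : ∫ x, (w ⊔ u) x ^ 2 ∂m ≤ ∫ x, w x ^ 2 ∂m + ∫ x, u x ^ 2 ∂m := by
    rw [← integral_add hwL.integrable_sq huL.integrable_sq]
    refine integral_mono hgL.integrable_sq (hwL.integrable_sq.add huL.integrable_sq) fun x => ?_
    rcases le_total (w x) (u x) with h | h <;>
      simp [h] <;> nlinarith [sq_nonneg (w x), sq_nonneg (u x)]
  have hpos : ∫ x, max (u x - w x) 0 ∂m = ∫ x, (w ⊔ u) x ∂m - ∫ x, w x ∂m := by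
    rw [← integral_sub (hgL.integrable one_le_two) (hwL.integrable one_le_two)]
    congr 1; ext x
    rcases le_total (w x) (u x) with h | h <;> simp [h]
  simp only [F, one_mul, one_div] at hF'
  rw [hpos, normHsq]
  linarith

theorem ae_nonpos_of_tendstoL2 {Ω : ℕ → Set X} {wn : ℕ → X → ℝ}
    (hmin : ∀ n, IsMinimizer S (Ω n) 1 (fun _ => 1) (wn n)) {w : X → ℝ} (hw : MemLp w 2 m)
    (hwc : TendstoL2 m wn w) {u : ℕ → X → ℝ} (hu : ∀ n, u n ∈ H0 S (Ω n)) {C : ℝ}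
    (hC : ∀ n, normHsq S (u n) ≤ C) {v : X → ℝ} (hv : MemLp v 2 m) (hvc : TendstoL2 m u v) :
    ∀ᵐ x ∂m, w x ≤ 0 → v x ≤ 0 := by
  refine ae_nonpos_of_integral_posPart_le (K := C / 2) (hv.integrable one_le_two)
    (hw.integrable one_le_two) fun s hs => ?_
  have hsu : ∀ n, MemLp (s • u n) 2 m := fun n => (S.memL2 (hu n).1).const_smul s
  have hwn : ∀ n, MemLp (wn n) 2 m := fun n => S.memL2 (hmin n).1.1
  have hdiff : ∀ n, MemLp (s • u n - wn n) 2 m := fun n => (hsu n).sub (hwn n)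
  have hlim := (((hvc.const_smul s).sub hwc hsu hwn (hv.const_smul s) hw).posPart hdiff
    ((hv.const_smul s).sub hw)).integral (fun n => (hdiff n).pos_part)
    ((hv.const_smul s).sub hw).pos_part
  refine le_of_tendsto' hlim fun n => ?_
  calc ∫ x, max (s * u n x - wn n x) 0 ∂m ≤ normHsq S (s • u n) / 2 :=
        (hmin n).integral_posPart_sub_le ((H0Submodule S (Ω n)).smul_mem s (hu n))
    _ = s ^ 2 * normHsq S (u n) / 2 := by rw [normHsq_smul s (hu n).1]
    _ ≤ s ^ 2 * (C / 2) := by nlinarith [hC n, sq_nonneg s]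

theorem mem_H0_of_tendstoL2 {Ω : ℕ → Set X} {wn : ℕ → X → ℝ}
    (hmin : ∀ n, IsMinimizer S (Ω n) 1 (fun _ => 1) (wn n)) {w : X → ℝ} (hw : MemLp w 2 m)
    (hwc : TendstoL2 m wn w) {u : ℕ → X → ℝ} (hu : ∀ n, u n ∈ H0 S (Ω n)) {C : ℝ}
    (hC : ∀ n, normHsq S (u n) ≤ C) {v : X → ℝ} (hv : v ∈ S.H) (hvc : TendstoL2 m u v) :
    v ∈ H0 S {x | 0 < w x} := by
  have hneg := ae_nonpos_of_tendstoL2 hmin hw hwc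
    (fun n => (H0Submodule S (Ω n)).smul_mem (-1) (hu n)) (C := C)
    (fun n => by rw [normHsq_smul _ (hu n).1]; linarith [hC n]) ((S.memL2 hv).const_smul (-1))
    (hvc.const_smul (-1))
  refine ⟨hv, ?_⟩
  filter_upwards [ae_nonpos_of_tendstoL2 hmin hw hwc hu hC (S.memL2 hv) hvc, hneg]
    with x h1 h2 hx
  have hx' : w x ≤ 0 := not_lt.1 hx
  have := h2 hx'
  simp only [Pi.smul_apply, smul_eq_mul] at this
  linarith [h1 hx']

end Torsion

section Orthogonalization
variable {X : Type*} [MeasurableSpace X] {m : Measure X}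

theorem _root_.LinearMap.IsOrthoᵢ.apply_sum_smul_self {R M ι : Type*} [CommRing R]
    [AddCommGroup M] [Module R M] [Fintype ι] {B : LinearMap.BilinForm R M} {v : ι → M}
    (hv : B.IsOrthoᵢ v) (d : ι → R) :
    B (∑ i, d i • v i) (∑ i, d i • v i) = ∑ i, d i ^ 2 * B (v i) (v i) := by
  classical
  simp only [map_sum, map_smul, LinearMap.sum_apply, LinearMap.smul_apply, smul_eq_mul]
  refine Finset.sum_congr rfl fun i _ => ?_
  rw [Finset.sum_eq_single i (fun j _ hji => by rw [hv hji, mul_zero]) (by simp)]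
  ring

theorem memLp_of_mem_span {ι : Type*} {b : ι → X → ℝ} (hb : ∀ i, MemLp (b i) 2 m) {u : X → ℝ}
    (hu : u ∈ Submodule.span ℝ (Set.range b)) : MemLp u 2 m := by
  induction hu using Submodule.span_induction with
  | mem x hx => obtain ⟨i, rfl⟩ := hx; exact hb i
  | zero => exact MemLp.zero
  | add x y _ _ hx hy => exact hx.add hy
  | smul a x _ hx => exact hx.const_smul a

noncomputable def toL2 (V : Submodule ℝ (X → ℝ)) (hV : ∀ u ∈ V, MemLp u 2 m) :
    V →ₗ[ℝ] Lp ℝ 2 m where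
  toFun u := (hV u u.2).toLp u
  map_add' _ _ := MemLp.toLp_add _ _
  map_smul' c _ := MemLp.toLp_const_smul c _

noncomputable def l2Form (V : Submodule ℝ (X → ℝ)) (hV : ∀ u ∈ V, MemLp u 2 m) :
    LinearMap.BilinForm ℝ V :=
  (innerₗ (Lp ℝ 2 m)).compl₁₂ (toL2 V hV) (toL2 V hV)

theorem l2Form_apply {V : Submodule ℝ (X → ℝ)} (hV : ∀ u ∈ V, MemLp u 2 m) (u v : V) :
    l2Form V hV u v = ∫ x, (u : X → ℝ) x * (v : X → ℝ) x ∂m := by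
  rw [integral_mul_eq_inner (hV u u.2) (hV v v.2)]
  rfl

theorem exists_ne_zero_sq_mul_eq_ite {q : ℝ} (hq : 0 ≤ q) :
    ∃ a : ℝ, a ≠ 0 ∧ a ^ 2 * q = if q = 0 then 0 else 1 := by
  by_cases h : q = 0
  · exact ⟨1, one_ne_zero, by simp [h]⟩
  · refine ⟨(√q)⁻¹, inv_ne_zero (Real.sqrt_ne_zero'.2 (lt_of_le_of_ne hq (Ne.symm h))), ?_⟩
    rw [if_neg h, inv_pow, Real.sq_sqrt hq, inv_mul_cancel₀ h]

/-- Linear independence is pointwise, so the span may contain nonzero `L²`-null functions: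
these cannot be normalized and are indexed by `g`. -/
theorem exists_orthonormal_family {ι : Type*} [Fintype ι] [DecidableEq ι] {b : ι → X → ℝ}
    (hb : ∀ i, MemLp (b i) 2 m) (hli : LinearIndependent ℝ b) :
    ∃ (e : ι → X → ℝ) (g : Finset ι), LinearIndependent ℝ e ∧
      (∀ i, e i ∈ Submodule.span ℝ (Set.range b)) ∧
      ∀ c : ι → ℝ, ∫ x, (∑ i, c i • e i) x ^ 2 ∂m = ∑ i ∈ gᶜ, c i ^ 2 := by
  set V := Submodule.span ℝ (Set.range b)
  have hV : ∀ u ∈ V, MemLp u 2 m := fun u hu => memLp_of_mem_span hb hu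
  have : FiniteDimensional ℝ V := FiniteDimensional.span_of_finite ℝ (Set.finite_range b)
  have hsymm : (l2Form V hV).IsSymm := ⟨fun u v => by simp only [l2Form_apply, mul_comm]⟩
  obtain ⟨v, hv⟩ : ∃ v : Module.Basis ι ℝ V, (l2Form V hV).IsOrthoᵢ v := by
    obtain ⟨v₀, hv₀⟩ := LinearMap.BilinForm.exists_orthogonal_basis
      (LinearMap.BilinForm.isSymm_iff.1 hsymm)
    exact ⟨v₀.reindex (v₀.indexEquiv (Module.Basis.span hli)), fun i j hij => by
      simpa [Function.onFun] using hv₀ ((Equiv.injective _).ne hij)⟩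
  have hq : ∀ i, 0 ≤ l2Form V hV (v i) (v i) := fun i => by
    rw [l2Form_apply]; exact integral_nonneg fun x => mul_self_nonneg _
  choose a ha haq using fun i => exists_ne_zero_sq_mul_eq_ite (hq i)
  refine ⟨fun i => a i • (v i : X → ℝ), ({i | l2Form V hV (v i) (v i) = 0} : Finset ι), ?_,
    fun i => V.smul_mem _ (v i).2, ?_⟩
  · exact (v.linearIndependent.map' V.subtype V.ker_subtype).units_smul
      (fun i => Units.mk0 (a i) (ha i))
  · intro c
    have hsum : ∑ i, c i • a i • (v i : X → ℝ) = ↑(∑ i, (c i * a i) • v i) := by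
      simp [mul_smul]
    rw [hsum, Finset.compl_filter, Finset.sum_filter]
    have hint : ∀ w : V, ∫ x, (w : X → ℝ) x ^ 2 ∂m = l2Form V hV w w := fun w => by
      rw [l2Form_apply]; simp only [sq]
    rw [hint, hv.apply_sum_smul_self]
    refine Finset.sum_congr rfl fun i _ => ?_
    rw [mul_pow, mul_assoc, haq i]
    split_ifs <;> simp

end Orthogonalization

section Eigenvalues
variable {X : Type*} [MeasurableSpace X] {m : Measure X} {S : Setting X m}

def RayleighLE (S : Setting X m) (V : Submodule ℝ (X → ℝ)) (B : ℝ) : Prop :=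
  ∀ u ∈ V, ∫ x, u x ^ 2 ∂m = 1 → ∫ x, S.D u x ^ 2 ∂m ≤ B

theorem H0_mono {ω Ω : Set X} (h : ω ⊆ Ω) : H0 S ω ⊆ H0 S Ω :=
  fun _ hu => ⟨hu.1, hu.2.mono fun _ hx hΩ => hx fun hω => hΩ (h hω)⟩

theorem lambdaK_anti {ω Ω : Set X} (h : ω ⊆ Ω) (k : ℕ) : lambdaK S Ω k ≤ lambdaK S ω k :=
  sInf_le_sInf fun _ ⟨b, hb, hli, hr⟩ => ⟨b, fun i => H0_mono h (hb i), hli, hr⟩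

theorem lambdaK_le_ofReal {Ω : Set X} {k : ℕ} {b : Fin k → X → ℝ} {B : ℝ}
    (hb : ∀ i, b i ∈ H0 S Ω) (hli : LinearIndependent ℝ b)
    (hR : RayleighLE S (Submodule.span ℝ (Set.range b)) B) :
    lambdaK S Ω k ≤ ENNReal.ofReal B := by
  refine sInf_le_of_le ⟨b, hb, hli, rfl⟩ (sSup_le ?_)
  rintro _ ⟨c, hc, rfl⟩
  refine ENNReal.ofReal_le_ofReal (hR _ ?_ hc)
  rw [← sum_smul_eq_fun]
  exact Submodule.sum_mem _ fun i _ => Submodule.smul_mem _ _ (Submodule.subset_span ⟨i, rfl⟩)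

theorem exists_rayleighLE_of_lambdaK_lt {Ω : Set X} {k : ℕ} {B : ℝ}
    (h : lambdaK S Ω k < ENNReal.ofReal B) :
    ∃ b : Fin k → X → ℝ, (∀ i, b i ∈ H0 S Ω) ∧ LinearIndependent ℝ b ∧
      RayleighLE S (Submodule.span ℝ (Set.range b)) B := by
  obtain ⟨_, ⟨b, hb, hli, rfl⟩, hlt⟩ := sInf_lt_iff.1 (show sInf _ < _ from h)
  refine ⟨b, hb, hli, fun u hu hu1 => ?_⟩
  obtain ⟨c, rfl⟩ := (Submodule.mem_span_range_iff_exists_fun ℝ).1 hu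
  rw [sum_smul_eq_fun] at hu1 ⊢
  refine ((ENNReal.ofReal_lt_ofReal_iff_of_nonneg (integral_nonneg fun x => sq_nonneg _)).1
    (lt_of_le_of_lt ?_ hlt)).le
  exact le_sSup ⟨c, hu1, rfl⟩

/-- A competitor in the min-max for `λ_k(Ω) ≤ B`, orthonormalized in `L²`. -/
structure IsTestFamily (S : Setting X m) (Ω : Set X) (B : ℝ) {ι : Type*} [Fintype ι]
    [DecidableEq ι] (g : Finset ι) (e : ι → X → ℝ) : Prop where
  mem_H0 : ∀ i, e i ∈ H0 S Ω
  linearIndependent : LinearIndependent ℝ e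
  integral_sq : ∀ c : ι → ℝ, ∫ x, (∑ i, c i • e i) x ^ 2 ∂m = ∑ i ∈ gᶜ, c i ^ 2
  rayleighLE : RayleighLE S (Submodule.span ℝ (Set.range e)) B

theorem exists_isTestFamily_of_lambdaK_lt {Ω : Set X} {k : ℕ} {B : ℝ}
    (h : lambdaK S Ω k < ENNReal.ofReal B) :
    ∃ (g : Finset (Fin k)) (e : Fin k → X → ℝ), IsTestFamily S Ω B g e := by
  obtain ⟨b, hb, hli, hR⟩ := exists_rayleighLE_of_lambdaK_lt h
  obtain ⟨e, g, heli, hespan, hq⟩ := exists_orthonormal_family (fun i => S.memL2 (hb i).1) hli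
  have hbH0 : Submodule.span ℝ (Set.range b) ≤ H0Submodule S Ω :=
    Submodule.span_le.2 (Set.range_subset_iff.2 hb)
  exact ⟨g, e, fun i => hbH0 (hespan i), heli, hq,
    fun u hu => hR u (Submodule.span_le.2 (Set.range_subset_iff.2 hespan) hu)⟩

namespace IsTestFamily
variable {Ω : Set X} {B : ℝ} {ι : Type*} [Fintype ι] [DecidableEq ι] {g : Finset ι}
  {e : ι → X → ℝ}

theorem integral_sq_apply (he : IsTestFamily S Ω B g e) (i : ι) :
    ∫ x, e i x ^ 2 ∂m = if i ∈ g then 0 else 1 := by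
  have := he.integral_sq (Pi.single i 1)
  simp only [Pi.single_apply, ite_smul, one_smul, zero_smul, Finset.sum_ite_eq',
    Finset.mem_univ, if_true] at this
  rw [this]
  by_cases hi : i ∈ g <;> simp [hi]

theorem ae_eq_zero (he : IsTestFamily S Ω B g e) {i : ι} (hi : i ∈ g) : e i =ᵐ[m] 0 := by
  have h := he.integral_sq_apply i
  rw [if_pos hi, integral_eq_zero_iff_of_nonneg (fun x => sq_nonneg _)
    (S.memL2 (he.mem_H0 i).1).integrable_sq] at h
  filter_upwards [h] with x hx
  simpa using hx

theorem normHsq_le (he : IsTestFamily S Ω B g e) (hB : 0 ≤ B) (i : ι) :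
    normHsq S (e i) ≤ 1 + B := by
  have hi := he.integral_sq_apply i
  rw [normHsq, hi]
  split_ifs at hi ⊢ with hg
  · rw [integral_D_sq_eq_zero (he.mem_H0 i).1 (he.ae_eq_zero hg)]
    linarith
  · linarith [he.rayleighLE _ (Submodule.subset_span ⟨i, rfl⟩) hi]

end IsTestFamily

end Eigenvalues

section Limit
variable {X : Type*} [MeasurableSpace X] {m : Measure X} {S : Setting X m}

theorem CompactEmbedding.exists_subseq_tendstoL2 (hcpt : CompactEmbedding S) {ι : Type*}
    [Fintype ι] {u : ℕ → ι → X → ℝ} (hu : ∀ n i, u n i ∈ S.H) {C : ℝ}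
    (hC : ∀ n i, normHsq S (u n i) ≤ C) :
    ∃ σ : ℕ → ℕ, StrictMono σ ∧ ∃ v : ι → X → ℝ,
      ∀ i, v i ∈ S.H ∧ TendstoL2 m (fun n => u (σ n) i) (v i) := by
  classical
  suffices h : ∀ s : Finset ι, ∃ σ : ℕ → ℕ, StrictMono σ ∧ ∃ v : ι → X → ℝ,
      ∀ i ∈ s, v i ∈ S.H ∧ TendstoL2 m (fun n => u (σ n) i) (v i) by
    obtain ⟨σ, hσ, v, hv⟩ := h Finset.univ
    exact ⟨σ, hσ, v, fun i => hv i (Finset.mem_univ i)⟩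
  intro s
  induction s using Finset.induction_on with
  | empty => exact ⟨id, strictMono_id, 0, by simp⟩
  | insert a s ha ih =>
    obtain ⟨σ, hσ, v, hv⟩ := ih
    obtain ⟨τ, va, hτ, hva, hconv⟩ :=
      hcpt (fun n => u (σ n) a) (fun n => hu _ a) ⟨C, fun n => hC _ a⟩
    refine ⟨σ ∘ τ, hσ.comp hτ, Function.update v a va, fun i hi => ?_⟩
    rcases Finset.mem_insert.1 hi with rfl | hi
    · simpa using ⟨hva, hconv⟩
    · rw [Function.update_of_ne (ne_of_mem_of_not_mem hi ha)]
      exact ⟨(hv i hi).1, (hv i hi).2.comp hτ.tendsto_atTop⟩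

theorem tendstoL2_sum_smul {ι : Type*} [Fintype ι] {E : ℕ → ι → X → ℝ} {v : ι → X → ℝ}
    (h : ∀ i, TendstoL2 m (fun n => E n i) (v i)) (hE : ∀ n i, MemLp (E n i) 2 m)
    (hv : ∀ i, MemLp (v i) 2 m) (c : ι → ℝ) :
    TendstoL2 m (fun n => ∑ i, c i • E n i) (∑ i, c i • v i) :=
  tendstoL2_finset_sum _ (fun i => (h i).const_smul (c i)) (fun n i => (hE n i).const_smul _)
    fun i => (hv i).const_smul _

theorem rayleighLE_of_tendstoL2 (hlsc : GradLSC S) {ι : Type*} [Fintype ι] {B : ℝ}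
    {E : ℕ → ι → X → ℝ} {v : ι → X → ℝ} (hE : ∀ n i, E n i ∈ S.H) (hv : ∀ i, MemLp (v i) 2 m)
    (h : ∀ i, TendstoL2 m (fun n => E n i) (v i))
    (hq : ∀ n (c : ι → ℝ), ∫ x, (∑ i, c i • E n i) x ^ 2 ∂m = ∫ x, (∑ i, c i • v i) x ^ 2 ∂m)
    (hR : ∀ n, RayleighLE S (Submodule.span ℝ (Set.range (E n))) B) :
    RayleighLE S (Submodule.span ℝ (Set.range v)) B := by
  intro u hu hu1
  obtain ⟨c, rfl⟩ := (Submodule.mem_span_range_iff_exists_fun ℝ).1 hu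
  have hE1 : ∀ n, ∫ x, (∑ i, c i • E n i) x ^ 2 ∂m = 1 := fun n => (hq n c).trans hu1
  have hEB : ∀ n, ∫ x, S.D (∑ i, c i • E n i) x ^ 2 ∂m ≤ B := fun n =>
    hR n _ (Submodule.sum_mem _ fun i _ => Submodule.smul_mem _ _
      (Submodule.subset_span ⟨i, rfl⟩)) (hE1 n)
  obtain ⟨-, hlim⟩ := hlsc (fun n => ∑ i, c i • E n i) (∑ i, c i • v i)
    (fun n => S.toSubmodule.sum_mem fun i _ => S.toSubmodule.smul_mem _ (hE n i))
    ⟨1 + B, fun n => by rw [normHsq, hE1 n]; linarith [hEB n]⟩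
    (tendstoL2_sum_smul h (fun n i => S.memL2 (hE n i)) hv c)
  refine hlim.trans (liminf_le_of_frequently_le (Frequently.of_forall hEB) ?_)
  exact ⟨0, eventually_map.2 (Eventually.of_forall fun n => integral_nonneg fun x => sq_nonneg _)⟩

theorem linearIndependent_of_integral_sq {ι : Type*} [Fintype ι] [DecidableEq ι]
    {v e : ι → X → ℝ} {g : Finset ι} (he : LinearIndependent ℝ e) (hve : ∀ i ∈ g, v i = e i)
    (hq : ∀ c : ι → ℝ, ∫ x, (∑ i, c i • v i) x ^ 2 ∂m = ∑ i ∈ gᶜ, c i ^ 2) :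
    LinearIndependent ℝ v := by
  rw [Fintype.linearIndependent_iff] at he ⊢
  intro c hc
  have hcg : ∀ i ∉ g, c i = 0 := by
    have h0 := hq c
    rw [hc] at h0
    simp only [Pi.zero_apply, ne_eq, OfNat.ofNat_ne_zero, not_false_eq_true, zero_pow,
      integral_zero] at h0
    intro i hi
    exact pow_eq_zero_iff two_ne_zero |>.1 <| (Finset.sum_eq_zero_iff_of_nonneg
      fun j _ => sq_nonneg (c j)).1 h0.symm i (Finset.mem_compl.2 hi)
  refine he c ?_
  rw [← hc]
  refine Finset.sum_congr rfl fun i _ => ?_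
  by_cases hi : i ∈ g
  · rw [hve i hi]
  · simp [hcg i hi]

variable [IsFiniteMeasure m]

/-- The `L²`-null members of the limit family are taken from a single `Ωₙ`, the others are
`L²` limits. -/
theorem IsTestFamily.exists_limit (hcpt : CompactEmbedding S) (hlsc : GradLSC S)
    {Ω : ℕ → Set X} {wn : ℕ → X → ℝ} (hmin : ∀ n, IsMinimizer S (Ω n) 1 (fun _ => 1) (wn n))
    {w : X → ℝ} (hw : MemLp w 2 m) (hwc : TendstoL2 m wn w) {B : ℝ} (hB : 0 ≤ B)
    {ι : Type*} [Fintype ι] [DecidableEq ι] {g : Finset ι} {E : ℕ → ι → X → ℝ}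
    (hE : ∀ n, IsTestFamily S (Ω n) B g (E n)) :
    ∃ v : ι → X → ℝ, IsTestFamily S {x | 0 < w x} B g v := by
  have hEH : ∀ n i, E n i ∈ S.H := fun n i => ((hE n).mem_H0 i).1
  obtain ⟨σ, hσ, v, hv⟩ := hcpt.exists_subseq_tendstoL2 hEH fun n => (hE n).normHsq_le hB
  obtain ⟨v', hv'g, hv'v⟩ : ∃ v' : ι → X → ℝ, (∀ i ∈ g, v' i = E (σ 0) i) ∧
      ∀ i ∉ g, v' i = v i :=
    ⟨g.piecewise (E (σ 0)) v, fun i hi => g.piecewise_eq_of_mem _ _ hi,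
      fun i hi => g.piecewise_eq_of_notMem _ _ hi⟩
  have hv'H : ∀ i, v' i ∈ S.H := fun i => by
    by_cases hi : i ∈ g
    · rw [hv'g i hi]; exact hEH _ i
    · rw [hv'v i hi]; exact (hv i).1
  have hconv : ∀ i, TendstoL2 m (fun n => E (σ n) i) (v' i) := fun i => by
    by_cases hi : i ∈ g
    · rw [hv'g i hi]
      exact tendstoL2_of_ae_eq fun n =>
        ((hE _).ae_eq_zero hi).trans ((hE _).ae_eq_zero hi).symm
    · rw [hv'v i hi]; exact (hv i).2
  have hEL : ∀ n i, MemLp (E (σ n) i) 2 m := fun n i => S.memL2 (hEH _ i)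
  have hv'L : ∀ i, MemLp (v' i) 2 m := fun i => S.memL2 (hv'H i)
  have hq : ∀ c : ι → ℝ, ∫ x, (∑ i, c i • v' i) x ^ 2 ∂m = ∑ i ∈ gᶜ, c i ^ 2 := fun c =>
    tendsto_nhds_unique ((tendstoL2_sum_smul hconv hEL hv'L c).integral_sq
      (fun n => memLp_finsetSum' _ fun i _ => (hEL n i).const_smul _)
      (memLp_finsetSum' _ fun i _ => (hv'L i).const_smul _))
      (by simp only [(hE _).integral_sq]; exact tendsto_const_nhds)
  refine ⟨v', fun i => mem_H0_of_tendstoL2 (fun n => hmin (σ n)) hw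
      (hwc.comp hσ.tendsto_atTop) (fun n => (hE (σ n)).mem_H0 i)
      (fun n => (hE _).normHsq_le hB i) (hv'H i) (hconv i),
    linearIndependent_of_integral_sq (hE (σ 0)).linearIndependent
      hv'g hq, hq,
    rayleighLE_of_tendstoL2 hlsc (fun n => hEH (σ n)) hv'L hconv
      (fun n c => ((hE _).integral_sq c).trans (hq c).symm) fun n => (hE _).rayleighLE⟩

theorem lambdaK_le_of_frequently_lt (hcpt : CompactEmbedding S) (hlsc : GradLSC S) {k : ℕ}
    {Ω : ℕ → Set X} {wn : ℕ → X → ℝ} (hmin : ∀ n, IsMinimizer S (Ω n) 1 (fun _ => 1) (wn n))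
    {w : X → ℝ} (hw : MemLp w 2 m) (hwc : TendstoL2 m wn w) {B : ℝ}
    (h : ∃ᶠ n in atTop, lambdaK S (Ω n) k < ENNReal.ofReal B) :
    lambdaK S {x | 0 < w x} k ≤ ENNReal.ofReal B := by
  have hB : 0 ≤ B := by
    obtain ⟨n, hn⟩ := h.exists
    exact ENNReal.ofReal_pos.1 (pos_of_gt hn) |>.le
  obtain ⟨g, hg⟩ := Filter.frequently_exists.1
    (h.mono fun n hn => exists_isTestFamily_of_lambdaK_lt hn)
  obtain ⟨φ, hφ, hφg⟩ := extraction_of_frequently_atTop hg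
  choose E hE using hφg
  obtain ⟨v, hv⟩ := IsTestFamily.exists_limit hcpt hlsc (fun n => hmin (φ n)) hw
    (hwc.comp hφ.tendsto_atTop) hB hE
  exact lambdaK_le_ofReal hv.mem_H0 hv.linearIndependent hv.rayleighLE

theorem lambdaK_le_liminf (hcpt : CompactEmbedding S) (hlsc : GradLSC S) (k : ℕ)
    {Ω : ℕ → Set X} {wn : ℕ → X → ℝ} (hmin : ∀ n, IsMinimizer S (Ω n) 1 (fun _ => 1) (wn n))
    {w : X → ℝ} (hw : MemLp w 2 m) (hwc : TendstoL2 m wn w) :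
    lambdaK S {x | 0 < w x} k ≤ liminf (fun n => lambdaK S (Ω n) k) atTop := by
  refine ENNReal.le_of_forall_pos_le_add fun ε hε hL => ?_
  have hfin : liminf (fun n => lambdaK S (Ω n) k) atTop + ε ≠ ⊤ := by finiteness
  rw [← ENNReal.ofReal_toReal hfin]
  refine lambdaK_le_of_frequently_lt hcpt hlsc hmin hw hwc (frequently_lt_of_liminf_lt (h := ?_))
  rw [ENNReal.ofReal_toReal hfin]
  exact ENNReal.lt_add_right hL.ne (by simpa using hε.ne')

end Limit

/-- `λ_k` is decreasing for set inclusion and lower semicontinuous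
along weak-γ-convergent sequences of energy sets. -/
theorem statement_17 {X : Type*} [MeasurableSpace X] {m : Measure X} [IsFiniteMeasure m]
    (S : Setting X m) (hcpt : CompactEmbedding S) (hlsc : GradLSC S) (k : ℕ) :
    (∀ ω Ω : Set X, ω ⊆ Ω → lambdaK S Ω k ≤ lambdaK S ω k) ∧
    (∀ (Ω : ℕ → Set X), (∀ n, MeasurableSet (Ω n)) →
      ∀ (wn : ℕ → X → ℝ), (∀ n, IsMinimizer S (Ω n) 1 (fun _ => 1) (wn n)) →
      (∀ n, m (Ω n \ {x | 0 < wn n x}) = 0) →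
      ∀ w : X → ℝ, w ∈ S.H →
      Tendsto (fun n => ∫ x, (wn n x - w x) ^ 2 ∂m) atTop (nhds 0) →
      lambdaK S {x | 0 < w x} k ≤ liminf (fun n => lambdaK S (Ω n) k) atTop) :=
  ⟨fun _ _ h => lambdaK_anti h k,
    fun _ _ _ hmin _ _ hw hwc => lambdaK_le_liminf hcpt hlsc k hmin (S.memL2 hw) hwc⟩

end AbsSob
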